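/- Let G and H be topological groups, G' the commutator subgroup of G (with the induced topology), and π : G → H a relatively compact homomorphism. Then the commutator subgroup of DG(π) is contained in DG(π|_{G'}), the discontinuity group of the restriction of π to G'. -/

import Mathlib

/-!
Commutation is continuous and sends `(1, 1)` to `1`, so every neighbourhood `U` of `1` in `G`
contains all commutators of some smaller neighbourhood `W`. Since `π` is a homomorphism,
`⁅π a, π b⁆ = π ⁅a, b⁆`, hence the commutator of two points of `closure (π '' W)` lies in the
closure of `π '' (U ∩ G')`. Finally the discontinuity group of `π|_{G'}` is a subgroup, so it
contains the subgroup generated by these commutators.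
-/

open Filter Topology
open scoped commutatorElement

theorem continuous_commutatorElement (G : Type*) [Group G] [TopologicalSpace G]
    [IsTopologicalGroup G] : Continuous fun p : G × G => ⁅p.1, p.2⁆ := by
  simp only [commutatorElement_def]
  fun_prop

theorem exists_nhds_one_commutatorElement_mem {G : Type*} [Group G] [TopologicalSpace G]
    [IsTopologicalGroup G] {U : Set G} (hU : U ∈ 𝓝 (1 : G)) :
    ∃ W ∈ 𝓝 (1 : G), ∀ a ∈ W, ∀ b ∈ W, ⁅a, b⁆ ∈ U := by
  have hU' : (fun p : G × G => ⁅p.1, p.2⁆) ⁻¹' U ∈ 𝓝 (1 : G) ×ˢ 𝓝 (1 : G) := by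
    rw [← nhds_prod_eq]
    exact (continuous_commutatorElement G).continuousAt.preimage_mem_nhds (by simpa using hU)
  obtain ⟨W, hW, hWU⟩ := mem_prod_self_iff.1 hU'
  exact ⟨W, hW, fun a ha b hb => hWU (Set.mk_mem_prod ha hb)⟩

namespace MonoidHom

variable {K H : Type*} [Group K] [TopologicalSpace K] [IsTopologicalGroup K]
  [Group H] [TopologicalSpace H] [IsTopologicalGroup H]

def discontinuityGroup (φ : K →* H) : Subgroup H where
  carrier := ⋂ V ∈ 𝓝 (1 : K), closure (φ '' V)
  one_mem' := by
    simp only [Set.mem_iInter₂]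
    exact fun V hV => subset_closure ⟨1, mem_of_mem_nhds hV, map_one φ⟩
  mul_mem' {a b} ha hb := by
    simp only [Set.mem_iInter₂] at ha hb ⊢
    intro V hV
    obtain ⟨W, hW, hWV⟩ := exists_nhds_one_split hV
    refine map_mem_closure₂ continuous_mul (ha W hW) (hb W hW) ?_
    rintro _ ⟨v, hv, rfl⟩ _ ⟨w, hw, rfl⟩
    exact ⟨v * w, hWV v hv w hw, map_mul φ v w⟩
  inv_mem' {a} ha := by
    simp only [Set.mem_iInter₂] at ha ⊢
    intro V hV
    refine map_mem_closure continuous_inv (ha V⁻¹ (inv_mem_nhds_one K hV)) ?_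
    rintro _ ⟨v, hv, rfl⟩
    exact ⟨v⁻¹, hv, map_inv φ v⟩

theorem mem_discontinuityGroup {φ : K →* H} {x : H} :
    x ∈ φ.discontinuityGroup ↔ ∀ V ∈ 𝓝 (1 : K), x ∈ closure (φ '' V) :=
  Set.mem_iInter₂

theorem mem_discontinuityGroup_comp_subtype {φ : K →* H} {N : Subgroup K} {x : H}
    (hx : ∀ U ∈ 𝓝 (1 : K), x ∈ closure (φ '' (U ∩ N))) :
    x ∈ (φ.comp N.subtype).discontinuityGroup := by
  refine mem_discontinuityGroup.2 fun V hV => ?_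
  obtain ⟨U, hU, hUV⟩ := (mem_nhds_subtype _ _ _).1 hV
  refine closure_mono ?_ (hx U hU)
  rintro _ ⟨k, ⟨hkU, hkN⟩, rfl⟩
  exact ⟨⟨k, hkN⟩, hUV hkU, rfl⟩

theorem commutatorElement_mem_discontinuityGroup_comp_commutator_subtype (φ : K →* H)
    {x y : H} (hx : x ∈ φ.discontinuityGroup) (hy : y ∈ φ.discontinuityGroup) :
    ⁅x, y⁆ ∈ (φ.comp (commutator K).subtype).discontinuityGroup := by
  refine mem_discontinuityGroup_comp_subtype fun U hU => ?_
  obtain ⟨W, hW, hWU⟩ := exists_nhds_one_commutatorElement_mem hU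
  refine map_mem_closure₂ (f := fun p q : H => ⁅p, q⁆) (continuous_commutatorElement H)
    (mem_discontinuityGroup.1 hx W hW) (mem_discontinuityGroup.1 hy W hW) ?_
  rintro _ ⟨a, ha, rfl⟩ _ ⟨b, hb, rfl⟩
  have hab : ⁅a, b⁆ ∈ commutator K :=
    Subgroup.commutator_mem_commutator (Subgroup.mem_top a) (Subgroup.mem_top b)
  exact ⟨⁅a, b⁆, ⟨hWU a ha b hb, hab⟩, map_commutatorElement φ a b⟩

end MonoidHom

theorem stmt5_general {G H : Type*} [Group G] [TopologicalSpace G] [IsTopologicalGroup G]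
    [Group H] [TopologicalSpace H] [IsTopologicalGroup H]
    (π : G →* H) :
    ((Subgroup.closure {z : H | ∃ x ∈ ⋂ U ∈ nhds (1 : G), closure (π '' U),
        ∃ y ∈ ⋂ U ∈ nhds (1 : G), closure (π '' U),
        z = x * y * x⁻¹ * y⁻¹} : Subgroup H) : Set H) ⊆
      ⋂ V ∈ nhds (1 : (commutator G)),
        closure ((fun v : commutator G => π v) '' V) := by
  refine (Subgroup.closure_le (π.comp (commutator G).subtype).discontinuityGroup).2 ?_
  rintro _ ⟨x, hx, y, hy, rfl⟩
  rw [← commutatorElement_def]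
  exact π.commutatorElement_mem_discontinuityGroup_comp_commutator_subtype hx hy

/-- The commutator subgroup of the discontinuity group `DG(π)` is contained in
the discontinuity group of the restriction of `π` to the commutator subgroup
`G' = [G,G]` of `G` (with the induced topology). -/
theorem stmt5 {G H : Type*} [Group G] [TopologicalSpace G] [IsTopologicalGroup G]
    [Group H] [TopologicalSpace H] [IsTopologicalGroup H] [T2Space H]
    (π : G →* H)
    (hrc : ∃ U ∈ nhds (1 : G), IsCompact (closure (π '' U))) :
    ((Subgroup.closure {z : H | ∃ x ∈ ⋂ U ∈ nhds (1 : G), closure (π '' U),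
        ∃ y ∈ ⋂ U ∈ nhds (1 : G), closure (π '' U),
        z = x * y * x⁻¹ * y⁻¹} : Subgroup H) : Set H) ⊆
      ⋂ V ∈ nhds (1 : (commutator G)),
        closure ((fun v : commutator G => π v) '' V) :=
  stmt5_general π
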